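/- Let M^1 be an initial 1D mesh and M* = {v_1*, ..., v_N*} a target mesh on [0,1]. Define one AMBER iteration by M^{t+1} = g_msh(I_{M^t}(f_e(M*))), where I_{M^t} linearly interpolates the target sizing field f_e(M*) between consecutive vertices of M^t. Then after N iterations, M^N = M*. -/
import Mathlib


/-- A 1D mesh on [0,1]: a strictly increasing finite sequence of `N` points
`v 0 = 0 < v 1 < ... < v (N-1) = 1`. -/
structure Mesh1D where
  N : ℕ
  hN : 2 ≤ N
  v : ℕ → ℝ
  mono : ∀ i j, i < j → j < N → v i < v j
  first : v 0 = 0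
  last : v (N - 1) = 1

/-- Index of the mesh interval containing `z`: the largest `i < N - 1` with `v i ≤ z`. -/
noncomputable def Mesh1D.idx (M : Mesh1D) (z : ℝ) : ℕ :=
  sSup {i | i < M.N - 1 ∧ M.v i ≤ z}

/-- The piecewise-constant sizing field of a mesh: `f_e(M)(z) = v (i+1) - v i`
for `v i ≤ z < v (i+1)` (with the last gap used at `z = 1`). -/
noncomputable def Mesh1D.fe (M : Mesh1D) (z : ℝ) : ℝ :=
  M.v (M.idx z + 1) - M.v (M.idx z)

/-- Linear interpolation of a function `g` along the mesh: at `z = (1-d) v i + d v (i+1)`,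
the value is `(1-d) g (v i) + d g (v (i+1))`. -/
noncomputable def Mesh1D.interp (M : Mesh1D) (g : ℝ → ℝ) (z : ℝ) : ℝ :=
  (1 - (z - M.v (M.idx z)) / (M.v (M.idx z + 1) - M.v (M.idx z))) * g (M.v (M.idx z))
    + (z - M.v (M.idx z)) / (M.v (M.idx z + 1) - M.v (M.idx z)) * g (M.v (M.idx z + 1))

/-- The greedy 1D mesh generator: `v 0 = 0`, `v (i+1) = min (v i + f (v i)) 1`.
Once `1` is reached the sequence stays at `1`, which models termination. -/
noncomputable def gen (f : ℝ → ℝ) : ℕ → ℝ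
  | 0 => 0
  | n + 1 => min (gen f n + f (gen f n)) 1

lemma Mesh1D.idx_vertex (M : Mesh1D) {k : ℕ} (hk : k < M.N - 1) :
    M.idx (M.v k) = k := by
  unfold Mesh1D.idx
  apply le_antisymm
  · apply csSup_le
    · exact ⟨k, hk, le_refl _⟩
    rintro i ⟨hi, hvi⟩
    by_contra h
    push_neg at h
    exact absurd hvi (not_le.2 (M.mono k i h (by omega)))
  · exact le_csSup ⟨M.N - 1, fun i hi => hi.1.le⟩ ⟨hk, le_refl _⟩

lemma Mesh1D.interp_vertex (M : Mesh1D) (g : ℝ → ℝ) {k : ℕ} (hk : k < M.N - 1) :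
    M.interp g (M.v k) = g (M.v k) := by
  simp [Mesh1D.interp, M.idx_vertex hk]

lemma Mesh1D.fe_vertex (M : Mesh1D) {k : ℕ} (hk : k < M.N - 1) :
    M.fe (M.v k) = M.v (k + 1) - M.v k := by
  simp [Mesh1D.fe, M.idx_vertex hk]

lemma Mesh1D.v_le_one (M : Mesh1D) {j : ℕ} (hj : j < M.N) : M.v j ≤ 1 := by
  rcases eq_or_lt_of_le (Nat.le_sub_one_of_lt hj) with h | h
  · rw [h, M.last]
  · exact (M.mono j (M.N - 1) h (by omega)).le.trans M.last.le

lemma Mesh1D.v_lt_one (M : Mesh1D) {j : ℕ} (hj : j < M.N - 1) : M.v j < 1 := by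
  have := M.mono j (M.N - 1) hj (by omega)
  rw [M.last] at this; exact this

/-- Convergence of the 1D AMBER iteration: let `Mstar` be the target mesh, and let
`Mseq t` be a sequence of meshes (with `Mseq 1` the initial mesh) such that each
`Mseq (t+1)` is the mesh generated by the greedy generator from the linear interpolation
of the target sizing field along `Mseq t`, i.e. `M^{t+1} = g_msh(I_{M^t}(f_e(M^*)))`
(its vertices are the generated points, and it contains all generated points up to the
first time `1` is reached).  Then after `N = Mstar.N` iterations the mesh equals `M*`. -/
theorem amber_converges (Mstar : Mesh1D) (Mseq : ℕ → Mesh1D)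
    (hstep : ∀ t ≥ 1, ∀ i < (Mseq (t + 1)).N,
      (Mseq (t + 1)).v i = gen ((Mseq t).interp Mstar.fe) i)
    (hterm : ∀ t ≥ 1, ∀ n < (Mseq (t + 1)).N - 1, gen ((Mseq t).interp Mstar.fe) n < 1) :
    (Mseq Mstar.N).N = Mstar.N ∧ ∀ i < Mstar.N, (Mseq Mstar.N).v i = Mstar.v i := by
  have hNs2 : 2 ≤ Mstar.N := Mstar.hN
  set Ns := Mstar.N with hNsdef
  have key : ∀ t, 1 ≤ t →
      (∀ i < min t Ns, (Mseq t).v i = Mstar.v i) ∧ min t Ns ≤ (Mseq t).N ∧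
      (Ns ≤ t → (Mseq t).N = Ns) := by
    intro t
    induction t with
    | zero => intro ht; omega
    | succ t ih =>
      intro _
      rcases Nat.eq_zero_or_pos t with h0 | ht1
      · subst h0
        refine ⟨?_, ?_, ?_⟩
        · intro i hi
          have : i = 0 := by omega
          rw [this, (Mseq 1).first, Mstar.first]
        · rw [Nat.min_eq_left (by omega : 1 ≤ Ns)]
          have := (Mseq (0 + 1)).hN
          omega
        · intro h; omega
      · obtain ⟨hpre, hNlo, _⟩ := ih ht1
        set f := (Mseq t).interp Mstar.fe with hf
        have claimC : ∀ i, i ≤ min t (Ns - 1) → gen f i = Mstar.v i := by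
          intro i
          induction i with
          | zero => intro _; rw [Mstar.first]; rfl
          | succ i ihc =>
            intro hi
            have hiN : i < Ns - 1 := by omega
            have hgi : gen f i = Mstar.v i := ihc (by omega)
            have hvi : (Mseq t).v i = Mstar.v i := hpre i (by omega)
            have hlt1 : Mstar.v i < 1 := Mstar.v_lt_one hiN
            have hiM : i < (Mseq t).N - 1 := by
              have h2 : i < (Mseq t).N := lt_of_lt_of_le (by omega : i < min t Ns) hNlo
              rcases (by omega : i < (Mseq t).N - 1 ∨ i = (Mseq t).N - 1) with h | h
              · exact h
              · exfalso
                rw [h] at hlt1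
                rw [h, (Mseq t).last] at hvi
                linarith
            have hfv : f (Mstar.v i) = Mstar.v (i + 1) - Mstar.v i := by
              rw [hf, ← hvi, (Mseq t).interp_vertex _ hiM, hvi, Mstar.fe_vertex hiN]
            have he : gen f (i + 1) = min (gen f i + f (gen f i)) 1 := rfl
            rw [he, hgi, hfv]
            have hr : Mstar.v i + (Mstar.v (i + 1) - Mstar.v i) = Mstar.v (i + 1) := by ring
            rw [hr, min_eq_left (Mstar.v_le_one (by omega))]
        have hN1 : min (t + 1) Ns ≤ (Mseq (t + 1)).N := by
          by_contra h
          push_neg at h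
          have h2 : 2 ≤ (Mseq (t + 1)).N := (Mseq (t + 1)).hN
          set k := (Mseq (t + 1)).N - 1 with hkdef
          have hk : gen f k = Mstar.v k := claimC k (by omega)
          have hlast : (Mseq (t + 1)).v k = 1 := (Mseq (t + 1)).last
          have hs := hstep t ht1 k (by omega)
          rw [hlast, hk] at hs
          have hv1 := Mstar.v_lt_one (j := k) (by omega)
          rw [← hs] at hv1
          exact lt_irrefl _ hv1
        refine ⟨?_, hN1, ?_⟩
        · intro i hi
          rw [hstep t ht1 i (lt_of_lt_of_le hi hN1)]
          exact claimC i (by omega)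
        · intro hle
          have hge : Ns ≤ (Mseq (t + 1)).N := le_trans (by omega) hN1
          by_contra hne
          have hlt : Ns - 1 < (Mseq (t + 1)).N - 1 := by omega
          have hterm' := hterm t ht1 (Ns - 1) hlt
          have hc : gen f (Ns - 1) = Mstar.v (Ns - 1) := claimC _ (by omega)
          rw [hc, Mstar.last] at hterm'
          exact lt_irrefl _ hterm'
  obtain ⟨h1, _, h3⟩ := key Ns (by omega)
  exact ⟨h3 le_rfl, fun i hi => h1 i (by omega)⟩
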